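/- Let R be a Frobenius k-algebra with nondegenerate form ⟨a,b⟩ = ε(ab) and Nakayama automorphism ν of finite order n. Equip the orbit algebra R/G (for G = ⟨ν⟩ cyclic of order n, acting by powers of ν) with the bilinear form ⟨s_{g^k}Pa, s_{g^l}Pb⟩_G = δ_{g^{k+l+1},1}⟨ν^l(a), b⟩. Then this form is symmetric and nondegenerate, so R/G is a symmetric algebra. -/
import Mathlib


open scoped BigOperators

/-- Let `R` be a Frobenius `k`-algebra with nondegenerate form `⟨a,b⟩ = ε (a*b)` and
Nakayama automorphism `ν` of finite order `n`.  The bilinear form on the orbit algebra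
`R/G` (whose underlying space is `⊕_{l ∈ Z_n} R`, a family `f : ZMod n → R` encoding
`Σ_l s_{g^l} P (f l)`) defined by `⟨s_{g^k}Pa, s_{g^l}Pb⟩_G = δ_{g^{k+l+1},1} ⟨ν^l a, b⟩`
is symmetric and nondegenerate; hence `R/G` is a symmetric algebra. -/
theorem stmt_2 (k R : Type*) [Field k] [Ring R] [Algebra k R] [FiniteDimensional k R]
    (ε : R →ₗ[k] k)
    (hnd : ∀ a : R, (∀ b : R, ε (a * b) = 0) → a = 0)
    (ν : R ≃ₐ[k] R) (hν : ∀ a b : R, ε (a * b) = ε (b * ν a))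
    (n : ℕ) [NeZero n] (hord : ν ^ n = 1)
    (B : (ZMod n → R) → (ZMod n → R) → k)
    (hB : ∀ f f' : ZMod n → R,
      B f f' = ∑ l : ZMod n, ε ((ν ^ l.val) (f (-l - 1)) * f' l)) :
    (∀ f f', B f f' = B f' f) ∧ (∀ f, f ≠ 0 → ∃ f', B f f' ≠ 0) := by
  have hinv : ∀ a b : R, ε (ν a * ν b) = ε (a * b) := by
    intro a b
    rw [← hν b (ν a), ← hν a b]
  have hj : ∀ (j : ℕ) (a b : R), ε ((ν ^ j) a * (ν ^ j) b) = ε (a * b) := by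
    intro j
    induction j with
    | zero => intro a b; simp
    | succ j ih =>
      intro a b
      rw [pow_succ', AlgEquiv.mul_apply, AlgEquiv.mul_apply, hinv, ih]
  have hdvd : ∀ (j : ℕ), n ∣ j → ∀ a : R, (ν ^ j) a = a := by
    intro j hj a
    obtain ⟨c, rfl⟩ := hj
    rw [pow_mul, hord, one_pow]
    rfl
  have key : ∀ (l : ZMod n) (a b : R),
      ε ((ν ^ l.val) a * b) = ε ((ν ^ (-l - 1).val) b * a) := by
    intro l a b
    have hd : n ∣ (-l - 1).val + (1 + l.val) := by
      have : ((((-l - 1).val + (1 + l.val) : ℕ)) : ZMod n) = 0 := by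
        push_cast [ZMod.natCast_val, ZMod.cast_id]
        ring
      exact (ZMod.natCast_eq_zero_iff _ n).mp this
    have ha : (ν ^ (-l - 1).val) (ν ((ν ^ l.val) a)) = a := by
      have := hdvd _ hd a
      rwa [pow_add, pow_add, pow_one, AlgEquiv.mul_apply, AlgEquiv.mul_apply] at this
    calc ε ((ν ^ l.val) a * b) = ε (b * ν ((ν ^ l.val) a)) := hν _ _
      _ = ε ((ν ^ (-l - 1).val) b * (ν ^ (-l - 1).val) (ν ((ν ^ l.val) a))) :=
          (hj _ _ _).symm
      _ = ε ((ν ^ (-l - 1).val) b * a) := by rw [ha]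
  constructor
  · intro f f'
    rw [hB, hB]
    have einv : Function.Involutive (fun l : ZMod n => -l - 1) := by
      intro l; ring
    rw [← Equiv.sum_comp einv.toPerm
      (fun l => ε ((ν ^ l.val) (f' (-l - 1)) * f l))]
    refine Finset.sum_congr rfl fun l _ => ?_
    have h1 : (-(-l - 1) - 1 : ZMod n) = l := by ring
    simp only [Function.Involutive.coe_toPerm]
    rw [h1, key]
  · intro f hf
    have : ∃ l, f l ≠ 0 := by
      by_contra h
      push_neg at h
      exact hf (funext h)
    obtain ⟨l0, hl0⟩ := this
    set l1 : ZMod n := -l0 - 1 with hl1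
    have ha : (ν ^ l1.val) (f l0) ≠ 0 := by
      intro h
      exact hl0 ((ν ^ l1.val).injective (by simpa using h))
    have : ¬ (∀ b : R, ε ((ν ^ l1.val) (f l0) * b) = 0) := fun h => ha (hnd _ h)
    push_neg at this
    obtain ⟨b, hb⟩ := this
    refine ⟨Pi.single l1 b, ?_⟩
    rw [hB]
    rw [Finset.sum_eq_single l1]
    · have h1 : (-l1 - 1 : ZMod n) = l0 := by rw [hl1]; ring
      rw [h1, Pi.single_eq_same]
      exact hb
    · intro c _ hc
      rw [Pi.single_eq_of_ne hc, mul_zero, map_zero]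
    · intro h
      exact absurd (Finset.mem_univ l1) h
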